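/- arXiv:2403.18753 — 2 statements merged into one kernel-verified Lean document; each statement's English description precedes it below -/
import Mathlib

section
/- Let 𝔉 be a convex compact set of density matrices on ℂ^d and ρ a density matrix with ρ ∉ 𝔉. Then for every temperature T > 0 there exists a positive semidefinite Hamiltonian H ≥ 0 such that Δ(ρ,H) > max_{η ∈ 𝔉} Δ(η,H), where Δ(ρ,H) = W(ρ,H) − W(ρ,0) is the work deficit at temperature T. Conversely, if ρ ∈ 𝔉 then no such H exists. -/
open Matrix ComplexOrder

noncomputable section

/-- A density matrix: positive semidefinite with unit trace. -/
def IsDensity {d : ℕ} (ρ : Matrix (Fin d) (Fin d) ℂ) : Prop :=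
  ρ.PosSemidef ∧ ρ.trace = 1

/-- Apply a real function to a Hermitian matrix via its spectral decomposition
(junk value `0` on non-Hermitian inputs). -/
def herFun {d : ℕ} (f : ℝ → ℝ) (A : Matrix (Fin d) (Fin d) ℂ) :
    Matrix (Fin d) (Fin d) ℂ :=
  if hA : A.IsHermitian then
    (hA.eigenvectorUnitary : Matrix (Fin d) (Fin d) ℂ) *
      Matrix.diagonal (fun i => (f (hA.eigenvalues i) : ℂ)) *
      star (hA.eigenvectorUnitary : Matrix (Fin d) (Fin d) ℂ)
  else 0

/-- Base-2 matrix logarithm of a Hermitian matrix (convention `log₂ 0 = 0` on the kernel,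
the standard convention for entropic quantities). -/
def matLog2 {d : ℕ} (A : Matrix (Fin d) (Fin d) ℂ) : Matrix (Fin d) (Fin d) ℂ :=
  herFun (Real.logb 2) A

/-- Von Neumann entropy in bits, `S₂(ρ) = −tr(ρ log₂ ρ)`. -/
def vnEnt2 {d : ℕ} (ρ : Matrix (Fin d) (Fin d) ℂ) : ℝ :=
  -((ρ * matLog2 ρ).trace.re)

/-- Base-2 quantum relative entropy `D(ρ‖σ) = tr(ρ(log₂ρ − log₂σ))`. -/
def relEnt2 {d : ℕ} (ρ σ : Matrix (Fin d) (Fin d) ℂ) : ℝ :=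
  ((ρ * (matLog2 ρ - matLog2 σ)).trace).re

/-- The (unnormalized) Boltzmann factor `e^{-H/(k_B T)}`. -/
def boltzmann {d : ℕ} (kB T : ℝ) (H : Matrix (Fin d) (Fin d) ℂ) :
    Matrix (Fin d) (Fin d) ℂ :=
  NormedSpace.exp (((-(1 / (kB * T)) : ℝ) : ℂ) • H)

/-- The Gibbs (thermal) state `γ = e^{-H/(k_B T)}/tr(e^{-H/(k_B T)})`. -/
def gibbs {d : ℕ} (kB T : ℝ) (H : Matrix (Fin d) (Fin d) ℂ) :
    Matrix (Fin d) (Fin d) ℂ :=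
  ((boltzmann kB T H).trace)⁻¹ • boltzmann kB T H

/-- The optimal extractable work `W(ρ,H) = (k_B T ln 2)·D(ρ‖γ)`. -/
def work {d : ℕ} (kB T : ℝ) (ρ H : Matrix (Fin d) (Fin d) ℂ) : ℝ :=
  kB * T * Real.log 2 * relEnt2 ρ (gibbs kB T H)

/-- Work extractable from the information content: `W_inf(ρ) = W(ρ,0) = (k_B T ln 2)·D(ρ‖I/d)`. -/
def workInf {d : ℕ} (kB T : ℝ) (ρ : Matrix (Fin d) (Fin d) ℂ) : ℝ :=
  kB * T * Real.log 2 * relEnt2 ρ (((d : ℂ))⁻¹ • (1 : Matrix (Fin d) (Fin d) ℂ))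

/-- The work deficit `Δ(ρ,H) = W(ρ,H) − W_inf(ρ)`. -/
def workDeficit {d : ℕ} (kB T : ℝ) (ρ H : Matrix (Fin d) (Fin d) ℂ) : ℝ :=
  work kB T ρ H - workInf kB T ρ

/-!
The Gibbs form `log γ_H = -log Z(H) - H/(k_B T)` makes the work deficit affine in the state:
`Δ(ρ, H) = k_B T (log Z(H) - log d) + Re tr(ρ H)` for every unit-trace `ρ`. Beating every
`η ∈ 𝔉` is therefore a strict separation of `ρ` from `𝔉` by the functional `Re tr(· H)`, which
Hahn–Banach provides when `ρ ∉ 𝔉`. Every real-linear functional is `Re tr(· B)`; on Hermitian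
arguments `B` may be replaced by its Hermitian part, and adding `‖B‖ • 1` then makes it positive
semidefinite while shifting the functional by a constant on unit-trace states.
-/

open scoped Matrix.Norms.L2Operator MatrixOrder ComplexStarModule

namespace Matrix

variable {n : Type*} [Fintype n]

lemma nonempty_of_trace_ne_zero {R : Type*} [AddCommMonoid R] {A : Matrix n n R}
    (h : A.trace ≠ 0) : Nonempty n := by
  by_contra hn
  simp [trace, not_nonempty_iff.mp hn] at h

lemma IsHermitian.posSemidef_add_algebraMap_norm [DecidableEq n] {A : Matrix n n ℂ}
    (hA : A.IsHermitian) : (A + algebraMap ℝ _ ‖A‖).PosSemidef := by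
  rw [← nonneg_iff_posSemidef, ← sub_neg_eq_add, sub_nonneg]
  exact hA.isSelfAdjoint.neg_algebraMap_norm_le_self

lemma re_trace_mul_algebraMap [DecidableEq n] (X : Matrix n n ℂ) (r : ℝ) :
    (X * algebraMap ℝ _ r).trace.re = r * X.trace.re := by
  simp [Algebra.algebraMap_eq_smul_one, trace_smul]

lemma re_trace_mul_star {X : Matrix n n ℂ} (hX : X.IsHermitian) (B : Matrix n n ℂ) :
    (X * star B).trace.re = (X * B).trace.re := by
  rw [star_eq_conjTranspose, ← hX.eq, ← conjTranspose_mul, trace_conjTranspose, trace_mul_comm,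
    hX.eq]
  rfl

lemma re_trace_mul_realPart {X : Matrix n n ℂ} (hX : X.IsHermitian) (B : Matrix n n ℂ) :
    (X * (ℜ B : Matrix n n ℂ)).trace.re = (X * B).trace.re := by
  rw [realPart_apply_coe, mul_smul_comm, trace_smul, mul_add, trace_add]
  simp only [Complex.real_smul, Complex.re_ofReal_mul, Complex.add_re]
  rw [re_trace_mul_star hX B]
  ring

lemma exists_re_trace_mul_eq {m : Type*} [Fintype m] [DecidableEq m] [DecidableEq n]
    (f : Matrix m n ℂ →ₗ[ℝ] ℝ) : ∃ B : Matrix n m ℂ, ∀ X, (X * B).trace.re = f X := by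
  refine ⟨of fun j i => (f (single i j 1) : ℂ) - f (single i j Complex.I) * Complex.I, fun X => ?_⟩
  have hsingle : ∀ i j, single i j (X i j)
      = (X i j).re • single i j (1 : ℂ) + (X i j).im • single i j Complex.I := by
    intro i j
    rw [smul_single, smul_single, ← single_add]
    congr 1
    simp
  conv_rhs => rw [matrix_eq_sum_single X]
  simp only [map_sum, hsingle, map_add, map_smul, trace, diag_apply, mul_apply, of_apply,
    Complex.re_sum, smul_eq_mul]
  refine Finset.sum_congr rfl fun i _ => Finset.sum_congr rfl fun j _ => ?_
  simp

theorem exists_posSemidef_re_trace_mul_lt [DecidableEq n] {F : Set (Matrix n n ℂ)}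
    (hconv : Convex ℝ F) (hclosed : IsClosed F)
    (hF : ∀ η ∈ F, η.IsHermitian ∧ η.trace = 1) {ρ : Matrix n n ℂ}
    (hρ : ρ.IsHermitian ∧ ρ.trace = 1) (hρF : ρ ∉ F) :
    ∃ H : Matrix n n ℂ, H.PosSemidef ∧ ∀ η ∈ F, (η * H).trace.re < (ρ * H).trace.re := by
  obtain ⟨f, u, hfρ, hfF⟩ := geometric_hahn_banach_point_closed hconv hclosed hρF
  obtain ⟨B, hB⟩ := exists_re_trace_mul_eq (-f : Matrix n n ℂ →L[ℝ] ℝ).toLinearMap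
  set A : Matrix n n ℂ := (ℜ B : Matrix n n ℂ)
  have hA : A.IsHermitian := (ℜ B).2
  refine ⟨A + algebraMap ℝ _ ‖A‖, hA.posSemidef_add_algebraMap_norm, fun η hη => ?_⟩
  have hshift : ∀ X : Matrix n n ℂ, X.IsHermitian ∧ X.trace = 1 →
      (X * (A + algebraMap ℝ _ ‖A‖)).trace.re = -f X + ‖A‖ := by
    rintro X ⟨hX, hXtr⟩
    rw [mul_add, trace_add, Complex.add_re, re_trace_mul_algebraMap, hXtr,
      re_trace_mul_realPart hX, hB]
    simp
  rw [hshift η (hF η hη), hshift ρ hρ]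
  linarith [hfF η hη]

end Matrix

lemma herFun_eq_cfc {d : ℕ} {A : Matrix (Fin d) (Fin d) ℂ} (hA : A.IsHermitian) (f : ℝ → ℝ) :
    herFun f A = cfc f A := by
  rw [herFun, dif_pos hA, hA.cfc_eq]
  rfl

lemma matLog2_eq_smul_log {d : ℕ} {A : Matrix (Fin d) (Fin d) ℂ} (hA : A.IsHermitian) :
    matLog2 A = (Real.log 2)⁻¹ • CFC.log A := by
  rw [matLog2, herFun_eq_cfc hA, CFC.log,
    ← cfc_const_mul _ _ _ (A.finite_real_spectrum.continuousOn _)]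
  simp only [inv_mul_eq_div]
  rfl

lemma relEnt2_eq_neg_vnEnt2_sub {d : ℕ} (ρ σ : Matrix (Fin d) (Fin d) ℂ) :
    relEnt2 ρ σ = -vnEnt2 ρ - (ρ * matLog2 σ).trace.re := by
  simp [relEnt2, vnEnt2, mul_sub, trace_sub]

section Thermal

variable {d : ℕ} (kB T : ℝ) {H : Matrix (Fin d) (Fin d) ℂ}

def partitionFunction (H : Matrix (Fin d) (Fin d) ℂ) : ℝ :=
  (boltzmann kB T H).trace.re

lemma boltzmann_eq_exp : boltzmann kB T H = NormedSpace.exp ((-(1 / (kB * T))) • H) := by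
  rw [boltzmann, Complex.coe_smul]

lemma isStrictlyPositive_boltzmann (hH : H.IsHermitian) :
    IsStrictlyPositive (boltzmann kB T H) := by
  rw [boltzmann_eq_exp]
  exact (isUnit_exp _).isStrictlyPositive
    ((IsSelfAdjoint.all _).smul hH.isSelfAdjoint).exp_nonneg

lemma ofReal_partitionFunction (hH : H.IsHermitian) :
    (partitionFunction kB T H : ℂ) = (boltzmann kB T H).trace :=
  Complex.ext rfl
    (Complex.nonneg_iff.mp (isStrictlyPositive_boltzmann kB T hH).nonneg.posSemidef.trace_nonneg).2

lemma partitionFunction_pos [Nonempty (Fin d)] (hH : H.IsHermitian) :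
    0 < partitionFunction kB T H :=
  (Complex.pos_iff.mp (isStrictlyPositive_boltzmann kB T hH).posDef.trace_pos).1

lemma gibbs_eq_smul_boltzmann (hH : H.IsHermitian) :
    gibbs kB T H = (partitionFunction kB T H)⁻¹ • boltzmann kB T H := by
  rw [gibbs, ← ofReal_partitionFunction kB T hH, ← Complex.ofReal_inv, Complex.coe_smul]

lemma log_gibbs [Nonempty (Fin d)] (hH : H.IsHermitian) :
    CFC.log (gibbs kB T H)
      = algebraMap ℝ _ (-Real.log (partitionFunction kB T H)) - (kB * T)⁻¹ • H := by
  rw [gibbs_eq_smul_boltzmann kB T hH,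
    CFC.log_smul' _ (inv_pos.2 (partitionFunction_pos kB T hH))
      (isStrictlyPositive_boltzmann kB T hH),
    boltzmann_eq_exp, CFC.log_exp _ ((IsSelfAdjoint.all _).smul hH.isSelfAdjoint), Real.log_inv]
  simp [sub_eq_add_neg, neg_smul]

lemma re_trace_mul_matLog2_gibbs (hH : H.IsHermitian) {ρ : Matrix (Fin d) (Fin d) ℂ}
    (hρ : ρ.trace = 1) :
    (ρ * matLog2 (gibbs kB T H)).trace.re
      = -(Real.log (partitionFunction kB T H) + (kB * T)⁻¹ * (ρ * H).trace.re) / Real.log 2 := by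
  have := nonempty_of_trace_ne_zero (hρ ▸ one_ne_zero)
  have hγ : (gibbs kB T H).IsHermitian := by
    rw [gibbs_eq_smul_boltzmann kB T hH]
    exact (IsSelfAdjoint.all _).smul (isStrictlyPositive_boltzmann kB T hH).isSelfAdjoint
  rw [matLog2_eq_smul_log hγ, log_gibbs kB T hH, mul_smul_comm, trace_smul, mul_sub, trace_sub,
    mul_smul_comm, trace_smul]
  simp only [Complex.smul_re, Complex.sub_re, re_trace_mul_algebraMap, hρ, Complex.one_re]
  ring

lemma work_eq (hkT : kB * T ≠ 0) (hH : H.IsHermitian) {ρ : Matrix (Fin d) (Fin d) ℂ}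
    (hρ : ρ.trace = 1) :
    work kB T ρ H = -(kB * T * Real.log 2 * vnEnt2 ρ) + kB * T * Real.log (partitionFunction kB T H)
      + (ρ * H).trace.re := by
  rw [work, relEnt2_eq_neg_vnEnt2_sub, re_trace_mul_matLog2_gibbs kB T hH hρ]
  generalize kB * T = c at hkT ⊢
  field_simp
  ring

lemma partitionFunction_zero : partitionFunction kB T (0 : Matrix (Fin d) (Fin d) ℂ) = d := by
  simp [partitionFunction, boltzmann]

lemma workInf_eq_work_zero (ρ : Matrix (Fin d) (Fin d) ℂ) : workInf kB T ρ = work kB T ρ 0 := by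
  simp [workInf, work, gibbs, boltzmann]

lemma workDeficit_eq (hkT : kB * T ≠ 0) (hH : H.IsHermitian) {ρ : Matrix (Fin d) (Fin d) ℂ}
    (hρ : ρ.trace = 1) :
    workDeficit kB T ρ H
      = kB * T * (Real.log (partitionFunction kB T H) - Real.log d) + (ρ * H).trace.re := by
  rw [workDeficit, workInf_eq_work_zero, work_eq kB T hkT hH hρ,
    work_eq kB T hkT isHermitian_zero hρ, partitionFunction_zero]
  simp only [mul_zero, trace_zero, Complex.zero_re]
  ring

end Thermal

/-- Corollary 2 of the paper: for a convex compact set `𝔉` of density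
matrices and a density matrix `ρ`, at any temperature `T > 0`, `ρ ∉ 𝔉` if and only if
some positive semidefinite Hamiltonian `H ≥ 0` gives `Δ(ρ,H) > max_{η∈𝔉} Δ(η,H)`. -/
theorem state_resource_certification_by_work {d : ℕ} (kB T : ℝ)
    (hkB : 0 < kB) (hT : 0 < T) {F : Set (Matrix (Fin d) (Fin d) ℂ)}
    (hF : ∀ η ∈ F, IsDensity η) (hconv : Convex ℝ F) (hcomp : IsCompact F)
    {ρ : Matrix (Fin d) (Fin d) ℂ} (hρ : IsDensity ρ) :
    ρ ∉ F ↔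
      ∃ H : Matrix (Fin d) (Fin d) ℂ, H.PosSemidef ∧
        ∀ η ∈ F, workDeficit kB T η H < workDeficit kB T ρ H := by
  have hkT : kB * T ≠ 0 := (mul_pos hkB hT).ne'
  refine ⟨fun hρF => ?_, fun ⟨H, _, hlt⟩ hρF => (hlt ρ hρF).false⟩
  obtain ⟨H, hH, hsep⟩ := exists_posSemidef_re_trace_mul_lt hconv hcomp.isClosed
    (fun η hη => ⟨(hF η hη).1.1, (hF η hη).2⟩) ⟨hρ.1.1, hρ.2⟩ hρF
  refine ⟨H, hH, fun η hη => ?_⟩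
  rw [workDeficit_eq kB T hkT hH.1 (hF η hη).2, workDeficit_eq kB T hkT hH.1 hρ.2]
  exact add_lt_add_right (hsep η hη) _
end
end

section
/- A measurement assemblage {M_{a|x}} is compatible (jointly measurable) if and only if the state assemblage {M_{a|x}ᵀ/d}_{a,x} induced by measuring the maximally entangled state admits a local hidden-state model. -/
open Matrix ComplexOrder

noncomputable section

/-- A state assemblage on a `d`-dimensional system `B`, with `nA` outcomes and `nX`
measurement settings: positive semidefinite operators with no-signalling marginals of
unit trace. -/
def IsAssemblage {d nA nX : ℕ} (A : Fin nA → Fin nX → Matrix (Fin d) (Fin d) ℂ) : Prop :=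
  (∀ a x, (A a x).PosSemidef) ∧
  (∀ x x', ∑ a, A a x = ∑ a, A a x') ∧
  (∀ x, (∑ a, A a x).trace = 1)

/-- An assemblage admits a local hidden-state (LHS) model if
`A_{a|x} = Σ_λ P(a|x,λ) P(λ) ρ_λ` for some finite hidden variable `λ`, probability
distribution `P(λ)`, conditional distributions `P(a|x,λ)` and density matrices `ρ_λ`. -/
def IsLHS {d nA nX : ℕ} (A : Fin nA → Fin nX → Matrix (Fin d) (Fin d) ℂ) : Prop :=
  ∃ (nL : ℕ) (p : Fin nL → ℝ) (P : Fin nA → Fin nX → Fin nL → ℝ)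
    (ρ : Fin nL → Matrix (Fin d) (Fin d) ℂ),
    (∀ l, 0 ≤ p l) ∧ (∑ l, p l = 1) ∧
    (∀ a x l, 0 ≤ P a x l) ∧ (∀ x l, ∑ a, P a x l = 1) ∧
    (∀ l, IsDensity (ρ l)) ∧
    (∀ a x, A a x = ∑ l, ((P a x l * p l : ℝ) : ℂ) • ρ l)

/-- `LHSof A`: the LHS assemblages reproducing the outcome statistics of `A`. -/
def LHSof {d nA nX : ℕ} (A : Fin nA → Fin nX → Matrix (Fin d) (Fin d) ℂ) :
    Set (Fin nA → Fin nX → Matrix (Fin d) (Fin d) ℂ) :=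
  {B | IsLHS B ∧ ∀ a x, (B a x).trace = (A a x).trace}

/-- A measurement assemblage `{M_{a|x}}` is compatible (jointly measurable) if it is
simulable from a single parent POVM `{G_λ}` via classical post-processing
`M_{a|x} = Σ_λ P(a|x,λ) G_λ`. -/
def Compatible {d nA nX : ℕ} (M : Fin nA → Fin nX → Matrix (Fin d) (Fin d) ℂ) : Prop :=
  ∃ (nL : ℕ) (G : Fin nL → Matrix (Fin d) (Fin d) ℂ)
    (P : Fin nA → Fin nX → Fin nL → ℝ),
    (∀ l, (G l).PosSemidef) ∧ (∑ l, G l = 1) ∧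
    (∀ a x l, 0 ≤ P a x l) ∧ (∀ x l, ∑ a, P a x l = 1) ∧
    (∀ a x, M a x = ∑ l, ((P a x l : ℝ) : ℂ) • G l)


/-!
Both sides say that an assemblage is a classical post-processing `Σ_λ P(a|x,λ) X_λ` of finitely
many positive semidefinite operators: of a POVM (`Σ_λ G_λ = 1`) for compatibility, of
subnormalised states (`Σ_λ tr σ_λ = 1`, `σ_λ = P(λ) ρ_λ`) for an LHS model. The map
`G ↦ Gᵀ/d` takes the first kind of model of `M` to the second kind of model of `Mᵀ/d`; its inverse
`σ ↦ d σᵀ` goes back, and `Σ_λ G_λ = 1` is then the marginal `Σ_a M_{a|x} = 1`.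
-/

section PostProcessing

variable {α χ ι n : Type*} [Fintype α] [Fintype ι]

def IsPostProcessing (A : α → χ → Matrix n n ℂ) (σ : ι → Matrix n n ℂ) : Prop :=
  ∃ P : α → χ → ι → ℝ, (∀ a x l, 0 ≤ P a x l) ∧ (∀ x l, ∑ a, P a x l = 1) ∧
    ∀ a x, A a x = ∑ l, (P a x l : ℂ) • σ l

theorem IsPostProcessing.sum_eq {A : α → χ → Matrix n n ℂ} {σ : ι → Matrix n n ℂ}
    (h : IsPostProcessing A σ) (x : χ) : ∑ a, A a x = ∑ l, σ l := by
  obtain ⟨P, -, hP1, hA⟩ := h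
  simp_rw [hA, Finset.sum_comm (γ := α), ← Finset.sum_smul, ← Complex.ofReal_sum, hP1,
    Complex.ofReal_one, one_smul]

theorem IsPostProcessing.smul_transpose {A : α → χ → Matrix n n ℂ} {σ : ι → Matrix n n ℂ}
    (h : IsPostProcessing A σ) (c : ℂ) :
    IsPostProcessing (fun a x => c • (A a x)ᵀ) (fun l => c • (σ l)ᵀ) := by
  obtain ⟨P, hP0, hP1, hA⟩ := h
  refine ⟨P, hP0, hP1, fun a x => ?_⟩
  simp only [hA, transpose_sum, transpose_smul, Finset.smul_sum, smul_comm c]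

theorem isPostProcessing_of_isEmpty [IsEmpty χ] (A : α → χ → Matrix n n ℂ)
    (σ : ι → Matrix n n ℂ) : IsPostProcessing A σ :=
  ⟨fun _ x _ => isEmptyElim x, fun _ x _ => isEmptyElim x, fun x _ => isEmptyElim x,
    fun _ x => isEmptyElim x⟩

end PostProcessing

theorem compatible_iff_exists_isPostProcessing {d nA nX : ℕ}
    (M : Fin nA → Fin nX → Matrix (Fin d) (Fin d) ℂ) :
    Compatible M ↔ ∃ (nL : ℕ) (G : Fin nL → Matrix (Fin d) (Fin d) ℂ),
      (∀ l, (G l).PosSemidef) ∧ ∑ l, G l = 1 ∧ IsPostProcessing M G := by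
  constructor
  · rintro ⟨nL, G, P, hG, hG1, hP0, hP1, hM⟩
    exact ⟨nL, G, hG, hG1, P, hP0, hP1, hM⟩
  · rintro ⟨nL, G, hG, hG1, P, hP0, hP1, hM⟩
    exact ⟨nL, G, P, hG, hG1, hP0, hP1, hM⟩

theorem isDensity_maximallyMixed {d : ℕ} (hd : 0 < d) :
    IsDensity ((d : ℂ)⁻¹ • (1 : Matrix (Fin d) (Fin d) ℂ)) := by
  refine ⟨PosSemidef.one.smul (by positivity), ?_⟩
  rw [trace_smul, trace_one, Fintype.card_fin, smul_eq_mul,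
    inv_mul_cancel₀ (Nat.cast_ne_zero.mpr hd.ne')]

theorem Matrix.PosSemidef.ofReal_re_trace {n : Type*} [Fintype n] {σ : Matrix n n ℂ}
    (hσ : σ.PosSemidef) : (σ.trace.re : ℂ) = σ.trace :=
  (Complex.eq_re_of_ofReal_le (r := 0) (by simpa using hσ.trace_nonneg)).symm

theorem Matrix.PosSemidef.exists_isDensity_eq_trace_smul {d : ℕ} (hd : 0 < d)
    {σ : Matrix (Fin d) (Fin d) ℂ} (hσ : σ.PosSemidef) :
    ∃ ρ, IsDensity ρ ∧ σ = (σ.trace.re : ℂ) • ρ := by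
  rw [hσ.ofReal_re_trace]
  by_cases h0 : σ.trace = 0
  · refine ⟨_, isDensity_maximallyMixed hd, ?_⟩
    rw [h0, zero_smul, ← hσ.trace_eq_zero_iff, h0]
  · refine ⟨σ.trace⁻¹ • σ, ⟨hσ.smul ?_, ?_⟩, ?_⟩
    · simpa using hσ.trace_nonneg
    · rw [trace_smul, smul_eq_mul, inv_mul_cancel₀ h0]
    · rw [smul_smul, mul_inv_cancel₀ h0, one_smul]

theorem isLHS_iff_exists_isPostProcessing {d nA nX : ℕ} (hd : 0 < d)
    (A : Fin nA → Fin nX → Matrix (Fin d) (Fin d) ℂ) :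
    IsLHS A ↔ ∃ (nL : ℕ) (σ : Fin nL → Matrix (Fin d) (Fin d) ℂ),
      (∀ l, (σ l).PosSemidef) ∧ ∑ l, (σ l).trace = 1 ∧ IsPostProcessing A σ := by
  constructor
  · rintro ⟨nL, p, P, ρ, hp0, hp1, hP0, hP1, hρ, hA⟩
    refine ⟨nL, fun l => (p l : ℂ) • ρ l, fun l => (hρ l).1.smul (by simpa using hp0 l), ?_,
      P, hP0, hP1, fun a x => ?_⟩
    · simp_rw [trace_smul, (hρ _).2, smul_eq_mul, mul_one, ← Complex.ofReal_sum, hp1,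
        Complex.ofReal_one]
    · simp_rw [hA, smul_smul, Complex.ofReal_mul]
  · rintro ⟨nL, σ, hσ, hσ1, P, hP0, hP1, hA⟩
    choose ρ hρ hσρ using fun l => (hσ l).exists_isDensity_eq_trace_smul hd
    refine ⟨nL, fun l => (σ l).trace.re, P, ρ, fun l => ?_, ?_, hP0, hP1, hρ, fun a x => ?_⟩
    · simpa using (Complex.nonneg_iff.mp (hσ l).trace_nonneg).1
    · simpa using congrArg Complex.re hσ1
    · conv_lhs => rw [hA]
      simp_rw [Complex.ofReal_mul, ← smul_smul, ← hσρ]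

theorem compatible_iff_maxEnt_assemblage_isLHS_general {d nA nX : ℕ} (hd : 0 < d)
    (M : Fin nA → Fin nX → Matrix (Fin d) (Fin d) ℂ)
    (hM1 : ∀ x, ∑ a, M a x = 1) :
    Compatible M ↔ IsLHS (fun a x => ((d : ℂ))⁻¹ • (M a x)ᵀ) := by
  have hdC : (d : ℂ) ≠ 0 := Nat.cast_ne_zero.mpr hd.ne'
  rw [compatible_iff_exists_isPostProcessing, isLHS_iff_exists_isPostProcessing hd]
  constructor
  · rintro ⟨nL, G, hG, hG1, hMG⟩
    refine ⟨nL, fun l => (d : ℂ)⁻¹ • (G l)ᵀ, fun l => (hG l).transpose.smul (by positivity),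
      ?_, hMG.smul_transpose _⟩
    simp_rw [trace_smul, trace_transpose, ← Finset.smul_sum, ← trace_sum, hG1, trace_one,
      Fintype.card_fin, smul_eq_mul, inv_mul_cancel₀ hdC]
  · rintro ⟨nL, σ, hσ, -, hMσ⟩
    obtain hX | ⟨⟨x⟩⟩ := isEmpty_or_nonempty (Fin nX)
    -- without a setting there is no marginal to recover `Σ G = 1` from, but then any POVM works
    · exact ⟨1, fun _ => 1, fun _ => PosSemidef.one, by simp, isPostProcessing_of_isEmpty _ _⟩
    have hMG : IsPostProcessing M (fun l => (d : ℂ) • (σ l)ᵀ) := by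
      simpa [smul_smul, hdC] using hMσ.smul_transpose (d : ℂ)
    exact ⟨nL, _, fun l => (hσ l).transpose.smul (by positivity), by rw [← hMG.sum_eq x, hM1 x],
      hMG⟩

/-- `{M_{a|x}}` is compatible if and only if the state assemblage
`{M_{a|x}ᵀ/d}` induced by measuring it on half of a maximally entangled state admits a
local hidden-state model. -/
theorem compatible_iff_maxEnt_assemblage_isLHS {d nA nX : ℕ} (hd : 0 < d)
    (M : Fin nA → Fin nX → Matrix (Fin d) (Fin d) ℂ)
    (hM : ∀ a x, (M a x).PosSemidef) (hM1 : ∀ x, ∑ a, M a x = 1) :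
    Compatible M ↔ IsLHS (fun a x => ((d : ℂ))⁻¹ • (M a x)ᵀ) :=
  compatible_iff_maxEnt_assemblage_isLHS_general hd M hM1
end
end
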